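/- arXiv:0708.2219 — 4 statements merged into one kernel-verified Lean document; each statement's English description precedes it below -/
import Mathlib

section
/- Let x₀ < x₁ be real numbers, and for each n let J_n ⊆ [x₀, x₁] be a measurable set and U_n, V_n be jointly measurable stochastic processes indexed by J_n. Let p ≥ 1, r > 1 and r' satisfy 1/r = 1 − 1/r', and set q' = (p−1)r'. Assume there exists K such that sup_{a∈J_n} E|U_n(a)|^{q'} ≤ K and sup_{a∈J_n} E|V_n(a)|^{q'} ≤ K for all n, and that sup_{a∈J_n} E|U_n(a) − V_n(a)|^r = o(n^{−r/6}) as n → ∞. Then ∫_{J_n} |U_n(a)|^p da = ∫_{J_n} |V_n(a)|^p da + o_P(n^{−1/6}), i.e., for every ε > 0, P(n^{1/6} |∫_{J_n} |U_n(a)|^p da − ∫_{J_n} |V_n(a)|^p da| > ε) → 0 as n → ∞. -/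
open MeasureTheory ProbabilityTheory Real Set Filter

noncomputable section

open scoped ENNReal Topology

/-!
By the mean value theorem, `||u|^p - |v|^p| ≤ p (|u|^(p-1) + |v|^(p-1)) |u - v|` for `p ≥ 1`.
Hölder's inequality with the conjugate exponents `r'`, `r` then bounds
`E ||U_n(a)|^p - |V_n(a)|^p|` by `2 p K^(1/r') (E |U_n(a) - V_n(a)|^r)^(1/r) = o(n^(-1/6))`,
uniformly in `a ∈ J_n`. Tonelli integrates this over `J_n ⊆ [x₀, x₁]`, so
`n^(1/6) E ∫_{J_n} ||U_n|^p - |V_n|^p| → 0`, and Markov's inequality gives the claim.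
-/

theorem rpow_sub_rpow_le_mul_sub {p a b : ℝ} (hp : 1 ≤ p) (hb : 0 ≤ b) (hba : b ≤ a) :
    a ^ p - b ^ p ≤ p * a ^ (p - 1) * (a - b) := by
  have hp0 : 0 ≤ p := zero_le_one.trans hp
  have hmvt := (convex_Icc b a).norm_image_sub_le_of_norm_hasDerivWithin_le
    (f := fun x : ℝ => x ^ p) (C := p * a ^ (p - 1))
    (fun x _ => (hasDerivAt_rpow_const (Or.inr hp)).hasDerivWithinAt)
    (fun x hx => by
      rw [norm_of_nonneg (by have := hb.trans hx.1; positivity)]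
      exact mul_le_mul_of_nonneg_left (rpow_le_rpow (hb.trans hx.1) hx.2 (by linarith)) hp0)
    (left_mem_Icc.2 hba) (right_mem_Icc.2 hba)
  rw [norm_of_nonneg (sub_nonneg.2 hba)] at hmvt
  exact (le_abs_self _).trans (by simpa only [Real.norm_eq_abs] using hmvt)

theorem abs_abs_rpow_sub_abs_rpow_le {p : ℝ} (hp : 1 ≤ p) (u v : ℝ) :
    |(|u| ^ p - |v| ^ p)| ≤ p * (|u| ^ (p - 1) + |v| ^ (p - 1)) * |u - v| := by
  wlog h : |v| ≤ |u| generalizing u v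
  · simpa only [abs_sub_comm, add_comm] using this v u (le_of_not_ge h)
  have hp0 : 0 ≤ p := zero_le_one.trans hp
  rw [abs_of_nonneg (sub_nonneg.2 (rpow_le_rpow (abs_nonneg v) h hp0))]
  calc |u| ^ p - |v| ^ p ≤ p * |u| ^ (p - 1) * (|u| - |v|) :=
        rpow_sub_rpow_le_mul_sub hp (abs_nonneg v) h
    _ ≤ p * (|u| ^ (p - 1) + |v| ^ (p - 1)) * |u - v| := by
        gcongr
        · exact le_add_of_nonneg_right (by positivity)
        · exact abs_sub_abs_le_abs_sub u v

section Moments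

variable {Ω : Type*} [MeasurableSpace Ω] (μ : Measure Ω)

theorem lintegral_ofReal_rpow_mul_enorm_le {r r' : ℝ} (hrr' : r'.HolderConjugate r) (s : ℝ)
    {Z W : Ω → ℝ} (hZ : Measurable Z) (hW : Measurable W) :
    ∫⁻ ω, ENNReal.ofReal (|Z ω| ^ s) * ‖W ω‖ₑ ∂μ ≤
      (∫⁻ ω, ENNReal.ofReal (|Z ω| ^ (s * r')) ∂μ) ^ (1 / r') *
        (∫⁻ ω, ENNReal.ofReal (|W ω| ^ r) ∂μ) ^ (1 / r) := by
  have hZs : ∀ ω, ENNReal.ofReal (|Z ω| ^ s) ^ r' = ENNReal.ofReal (|Z ω| ^ (s * r')) :=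
    fun ω => by
      rw [ENNReal.ofReal_rpow_of_nonneg (by positivity) hrr'.nonneg, rpow_mul (abs_nonneg _)]
  have hWr : ∀ ω, ‖W ω‖ₑ ^ r = ENNReal.ofReal (|W ω| ^ r) := fun ω => by
    rw [enorm_eq_ofReal_abs, ENNReal.ofReal_rpow_of_nonneg (abs_nonneg _) hrr'.symm.nonneg]
  have hholder := ENNReal.lintegral_mul_le_Lp_mul_Lq μ hrr'
    (f := fun ω => ENNReal.ofReal (|Z ω| ^ s)) (g := fun ω => ‖W ω‖ₑ)
    (ENNReal.measurable_ofReal.comp (hZ.abs.pow_const s)).aemeasurable hW.enorm.aemeasurable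
  simpa only [Pi.mul_apply, hZs, hWr] using hholder

theorem lintegral_enorm_abs_rpow_sub_abs_rpow_le {p r r' : ℝ} (hp : 1 ≤ p)
    (hrr' : r'.HolderConjugate r) {X Y : Ω → ℝ} (hX : Measurable X) (hY : Measurable Y)
    {A B : ℝ≥0∞}
    (hXA : ∫⁻ ω, ENNReal.ofReal (|X ω| ^ ((p - 1) * r')) ∂μ ≤ A)
    (hYA : ∫⁻ ω, ENNReal.ofReal (|Y ω| ^ ((p - 1) * r')) ∂μ ≤ A)
    (hXYB : ∫⁻ ω, ENNReal.ofReal (|X ω - Y ω| ^ r) ∂μ ≤ B) :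
    ∫⁻ ω, ‖|X ω| ^ p - |Y ω| ^ p‖ₑ ∂μ ≤ 2 * ENNReal.ofReal p * A ^ (1 / r') * B ^ (1 / r) := by
  have hp0 : 0 ≤ p := zero_le_one.trans hp
  have hholder : ∀ Z : Ω → ℝ, Measurable Z →
      ∫⁻ ω, ENNReal.ofReal (|Z ω| ^ ((p - 1) * r')) ∂μ ≤ A →
      ∫⁻ ω, ENNReal.ofReal (|Z ω| ^ (p - 1)) * ‖X ω - Y ω‖ₑ ∂μ ≤ A ^ (1 / r') * B ^ (1 / r) :=
    fun Z hZ hZA => (lintegral_ofReal_rpow_mul_enorm_le μ hrr' _ hZ (hX.sub hY)).trans <|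
      mul_le_mul' (ENNReal.rpow_le_rpow hZA (one_div_nonneg.2 hrr'.nonneg))
        (ENNReal.rpow_le_rpow hXYB (one_div_nonneg.2 hrr'.symm.nonneg))
  have hpointwise : ∀ ω, ‖|X ω| ^ p - |Y ω| ^ p‖ₑ ≤ ENNReal.ofReal p *
      (ENNReal.ofReal (|X ω| ^ (p - 1)) * ‖X ω - Y ω‖ₑ +
        ENNReal.ofReal (|Y ω| ^ (p - 1)) * ‖X ω - Y ω‖ₑ) := fun ω => by
    rw [enorm_eq_ofReal_abs, enorm_eq_ofReal_abs, ← add_mul,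
      ← ENNReal.ofReal_add (by positivity) (by positivity), ← ENNReal.ofReal_mul (by positivity),
      ← ENNReal.ofReal_mul hp0, ← mul_assoc]
    exact ENNReal.ofReal_le_ofReal (abs_abs_rpow_sub_abs_rpow_le hp _ _)
  calc ∫⁻ ω, ‖|X ω| ^ p - |Y ω| ^ p‖ₑ ∂μ
      ≤ ENNReal.ofReal p * (∫⁻ ω, ENNReal.ofReal (|X ω| ^ (p - 1)) * ‖X ω - Y ω‖ₑ ∂μ +
          ∫⁻ ω, ENNReal.ofReal (|Y ω| ^ (p - 1)) * ‖X ω - Y ω‖ₑ ∂μ) := by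
        rw [← lintegral_add_left, ← lintegral_const_mul' _ _ ENNReal.ofReal_ne_top]
        · exact lintegral_mono hpointwise
        · exact (ENNReal.measurable_ofReal.comp (hX.abs.pow_const _)).mul (hX.sub hY).enorm
    _ ≤ ENNReal.ofReal p * (A ^ (1 / r') * B ^ (1 / r) + A ^ (1 / r') * B ^ (1 / r)) := by
        gcongr
        exacts [hholder X hX hXA, hholder Y hY hYA]
    _ = 2 * ENNReal.ofReal p * A ^ (1 / r') * B ^ (1 / r) := by ring

end Moments

theorem lintegral_setLIntegral_le_measure_mul {α Ω : Type*} [MeasurableSpace α]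
    [MeasurableSpace Ω] {ν : Measure α} {μ : Measure Ω} [SFinite ν] [SFinite μ]
    {F : α → Ω → ℝ≥0∞} (hF : Measurable (Function.uncurry F)) {J : Set α} {M : ℝ≥0∞}
    (hM : ∀ a ∈ J, ∫⁻ ω, F a ω ∂μ ≤ M) :
    ∫⁻ ω, ∫⁻ a in J, F a ω ∂ν ∂μ ≤ ν J * M := by
  have hF' : Measurable (Function.uncurry fun ω a => F a ω) := hF.comp measurable_swap
  rw [lintegral_lintegral_swap hF'.aemeasurable, mul_comm, ← setLIntegral_const]
  exact setLIntegral_mono measurable_const hM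

section Processes

variable {α Ω : Type*} [MeasurableSpace α] [MeasurableSpace Ω] {ν : Measure α} {μ : Measure Ω}
  [SFinite ν] [SFinite μ] {p r r' : ℝ} {U V : α → Ω → ℝ} {J : Set α}

theorem lintegral_setLIntegral_enorm_abs_rpow_sub_abs_rpow_le (hp : 1 ≤ p)
    (hrr' : r'.HolderConjugate r) (hU : Measurable (Function.uncurry U))
    (hV : Measurable (Function.uncurry V)) {A B : ℝ≥0∞}
    (hUA : ∀ a ∈ J, ∫⁻ ω, ENNReal.ofReal (|U a ω| ^ ((p - 1) * r')) ∂μ ≤ A)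
    (hVA : ∀ a ∈ J, ∫⁻ ω, ENNReal.ofReal (|V a ω| ^ ((p - 1) * r')) ∂μ ≤ A)
    (hUVB : ∀ a ∈ J, ∫⁻ ω, ENNReal.ofReal (|U a ω - V a ω| ^ r) ∂μ ≤ B) :
    ∫⁻ ω, ∫⁻ a in J, ‖|U a ω| ^ p - |V a ω| ^ p‖ₑ ∂ν ∂μ ≤
      ν J * (2 * ENNReal.ofReal p * A ^ (1 / r') * B ^ (1 / r)) :=
  lintegral_setLIntegral_le_measure_mul
    ((hU.abs.pow_const p).sub (hV.abs.pow_const p)).enorm fun a ha =>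
      lintegral_enorm_abs_rpow_sub_abs_rpow_le μ hp hrr' (hU.comp measurable_prodMk_left)
        (hV.comp measurable_prodMk_left) (hUA a ha) (hVA a ha) (hUVB a ha)

theorem ofReal_rpow_mul_lintegral_setLIntegral_le (hp : 1 ≤ p) (hrr' : r'.HolderConjugate r)
    (hU : Measurable (Function.uncurry U)) (hV : Measurable (Function.uncurry V))
    {s t ε L : ℝ} (ht : 0 < t) (hε : 0 ≤ ε) {A : ℝ≥0∞} (hJ : ν J ≤ ENNReal.ofReal L)
    (hUA : ∀ a ∈ J, ∫⁻ ω, ENNReal.ofReal (|U a ω| ^ ((p - 1) * r')) ∂μ ≤ A)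
    (hVA : ∀ a ∈ J, ∫⁻ ω, ENNReal.ofReal (|V a ω| ^ ((p - 1) * r')) ∂μ ≤ A)
    (hUV : ∀ a ∈ J,
      ∫⁻ ω, ENNReal.ofReal (|U a ω - V a ω| ^ r) ∂μ ≤ ENNReal.ofReal (ε ^ r * t ^ (-r * s))) :
    ENNReal.ofReal (t ^ s) * ∫⁻ ω, ∫⁻ a in J, ‖|U a ω| ^ p - |V a ω| ^ p‖ₑ ∂ν ∂μ ≤
      ENNReal.ofReal L * 2 * ENNReal.ofReal p * A ^ (1 / r') * ENNReal.ofReal ε := by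
  have hr : 0 < r := hrr'.symm.pos
  have hscale : t ^ s * (ε ^ r * t ^ (-r * s)) ^ (1 / r) = ε := by
    rw [mul_rpow (by positivity) (by positivity), ← rpow_mul hε, ← rpow_mul ht.le,
      mul_one_div_cancel hr.ne', rpow_one, mul_left_comm, ← rpow_add ht,
      show s + -r * s * (1 / r) = 0 by field_simp; ring, rpow_zero, mul_one]
  calc ENNReal.ofReal (t ^ s) * ∫⁻ ω, ∫⁻ a in J, ‖|U a ω| ^ p - |V a ω| ^ p‖ₑ ∂ν ∂μ
      ≤ ENNReal.ofReal (t ^ s) * (ENNReal.ofReal L * (2 * ENNReal.ofReal p * A ^ (1 / r') *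
          ENNReal.ofReal (ε ^ r * t ^ (-r * s)) ^ (1 / r))) := by
        gcongr
        exact (lintegral_setLIntegral_enorm_abs_rpow_sub_abs_rpow_le hp hrr' hU hV hUA hVA
          hUV).trans (mul_le_mul_left hJ _)
    _ = ENNReal.ofReal L * 2 * ENNReal.ofReal p * A ^ (1 / r') *
          ENNReal.ofReal (t ^ s * (ε ^ r * t ^ (-r * s)) ^ (1 / r)) := by
        rw [ENNReal.ofReal_mul (p := t ^ s) (by positivity),
          ← ENNReal.ofReal_rpow_of_nonneg (by positivity) (one_div_nonneg.2 hr.le)]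
        ring
    _ = ENNReal.ofReal L * 2 * ENNReal.ofReal p * A ^ (1 / r') * ENNReal.ofReal ε := by
        rw [hscale]

end Processes

/-- No integrability is needed: if `f - g` is integrable then `f` and `g` are integrable or not
together (and both integrals vanish in the latter case); otherwise the right side is `∞`. -/
theorem enorm_integral_sub_integral_le {α E : Type*} [MeasurableSpace α] {μ : Measure α}
    [NormedAddCommGroup E] [NormedSpace ℝ E] {f g : α → E}
    (hf : AEStronglyMeasurable f μ) (hg : AEStronglyMeasurable g μ) :
    ‖∫ x, f x ∂μ - ∫ x, g x ∂μ‖ₑ ≤ ∫⁻ x, ‖f x - g x‖ₑ ∂μ := by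
  by_cases hfg : Integrable (fun x => f x - g x) μ
  · by_cases hfi : Integrable f μ
    · have hgi : Integrable g μ := (hfi.sub hfg).congr (ae_of_all _ fun x => sub_sub_cancel _ _)
      rw [← integral_sub hfi hgi]
      exact enorm_integral_le_lintegral_enorm _
    · have hgi : ¬Integrable g μ := fun hgi =>
        hfi ((hfg.add hgi).congr (ae_of_all _ fun x => sub_add_cancel _ _))
      simp [integral_undef hfi, integral_undef hgi]
  · have : ∫⁻ x, ‖f x - g x‖ₑ ∂μ = ∞ :=
      not_lt_top_iff.1 fun hfin => hfg ⟨hf.sub hg, hfin⟩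
    simp [this]

theorem tendsto_measure_lt_of_tendsto_lintegral {Ω ι : Type*} [MeasurableSpace Ω]
    {μ : Measure Ω} {l : Filter ι} {Y : ι → Ω → ℝ} {Z : ι → Ω → ℝ≥0∞}
    (hZ : ∀ i, AEMeasurable (Z i) μ) (hYZ : ∀ i ω, ENNReal.ofReal (Y i ω) ≤ Z i ω)
    (hlim : Tendsto (fun i => ∫⁻ ω, Z i ω ∂μ) l (𝓝 0)) {e : ℝ} (he : 0 < e) :
    Tendsto (fun i => μ {ω | e < Y i ω}) l (𝓝 0) := by
  have he' : ENNReal.ofReal e ≠ 0 := (ENNReal.ofReal_pos.2 he).ne'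
  refine tendsto_of_tendsto_of_tendsto_of_le_of_le tendsto_const_nhds
    (by simpa using ENNReal.Tendsto.div_const hlim (Or.inr he')) (fun _ => zero_le) fun i => ?_
  calc μ {ω | e < Y i ω} ≤ μ {ω | ENNReal.ofReal e ≤ Z i ω} :=
        measure_mono fun ω hω => (ENNReal.ofReal_le_ofReal hω.le).trans (hYZ i ω)
    _ ≤ (∫⁻ ω, Z i ω ∂μ) / ENNReal.ofReal e :=
        meas_ge_le_lintegral_div (hZ i) he' ENNReal.ofReal_ne_top

theorem ENNReal.tendsto_zero_of_eventually_le_mul_ofReal {ι : Type*} {l : Filter ι}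
    {u : ι → ℝ≥0∞} {C : ℝ≥0∞} (hC : C ≠ ∞)
    (h : ∀ ε > 0, ∀ᶠ i in l, u i ≤ C * ENNReal.ofReal ε) : Tendsto u l (𝓝 0) := by
  refine ENNReal.tendsto_nhds_zero.2 fun δ hδ => ?_
  have hsmall : Tendsto (fun ε => C * ENNReal.ofReal ε) (𝓝[>] 0) (𝓝 0) := by
    simpa using ENNReal.Tendsto.const_mul
      ((ENNReal.continuous_ofReal.tendsto 0).mono_left nhdsWithin_le_nhds) (Or.inr hC)
  obtain ⟨ε, hεδ, hε⟩ :=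
    ((hsmall.eventually (ge_mem_nhds hδ)).and self_mem_nhdsWithin).exists
  exact (h ε hε).mono fun i hi => hi.trans hεδ

theorem stmt_8_general (x₀ x₁ : ℝ) (p r r' : ℝ) (hp : 1 ≤ p) (hr : 1 < r)
    (hrr' : 1 / r = 1 - 1 / r')
    (J : ℕ → Set ℝ) (hJsub : ∀ n, J n ⊆ Icc x₀ x₁)
    (Ω : Type) [MeasurableSpace Ω] (P : Measure Ω) (hP : IsProbabilityMeasure P)
    (U V : ℕ → ℝ → Ω → ℝ)
    (hUm : ∀ n, Measurable (Function.uncurry (U n)))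
    (hVm : ∀ n, Measurable (Function.uncurry (V n)))
    (K : ℝ)
    -- uniformly bounded moments of order `q' = (p−1) r'`
    (hU : ∀ n, ∀ a ∈ J n,
      ∫⁻ ω, ENNReal.ofReal (|U n a ω| ^ ((p - 1) * r')) ∂P ≤ ENNReal.ofReal K)
    (hV : ∀ n, ∀ a ∈ J n,
      ∫⁻ ω, ENNReal.ofReal (|V n a ω| ^ ((p - 1) * r')) ∂P ≤ ENNReal.ofReal K)
    -- `sup_{a∈J_n} E|U_n(a) − V_n(a)|^r = o(n^{−r/6})`
    (hdiff : ∀ ε : ℝ, 0 < ε → ∃ N : ℕ, ∀ n : ℕ, N ≤ n → ∀ a ∈ J n,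
      ∫⁻ ω, ENNReal.ofReal (|U n a ω - V n a ω| ^ r) ∂P ≤
        ENNReal.ofReal (ε * (n:ℝ) ^ (-r/6))) :
    ∀ ε : ℝ, 0 < ε →
      Tendsto (fun n : ℕ => P {ω | ε < (n:ℝ) ^ ((1:ℝ)/6) *
        |(∫ a in J n, |U n a ω| ^ p) - ∫ a in J n, |V n a ω| ^ p|}) atTop (nhds 0) := by
  intro e he
  have hconj : r'.HolderConjugate r := by
    have hr0 : 0 < r := zero_lt_one.trans hr
    have hr' : 0 < 1 / r' := by linarith [(div_lt_one hr0).2 hr]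
    exact ⟨by simp only [inv_eq_one_div]; linarith, one_div_pos.1 hr', hr0⟩
  have hC : ENNReal.ofReal (x₁ - x₀) * 2 * ENNReal.ofReal p * ENNReal.ofReal K ^ (1 / r') ≠ ∞ :=
    ENNReal.mul_ne_top (by finiteness)
      (ENNReal.rpow_ne_top_of_nonneg (one_div_nonneg.2 hconj.nonneg) ENNReal.ofReal_ne_top)
  refine tendsto_measure_lt_of_tendsto_lintegral (Z := fun (n : ℕ) ω =>
      ENNReal.ofReal ((n:ℝ) ^ ((1:ℝ)/6)) * ∫⁻ a in J n, ‖|U n a ω| ^ p - |V n a ω| ^ p‖ₑ)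
    (fun n => ?_) (fun n ω => ?_) ?_ he
  · exact ((((hUm n).abs.pow_const p).sub ((hVm n).abs.pow_const p)).enorm.comp
      measurable_swap).lintegral_prod_right'.const_mul _ |>.aemeasurable
  · rw [ENNReal.ofReal_mul (by positivity), ← enorm_eq_ofReal_abs]
    gcongr
    exact enorm_integral_sub_integral_le
      (((hUm n).comp measurable_prodMk_right).abs.pow_const p).aestronglyMeasurable
      (((hVm n).comp measurable_prodMk_right).abs.pow_const p).aestronglyMeasurable
  · simp_rw [lintegral_const_mul' _ _ ENNReal.ofReal_ne_top]
    refine ENNReal.tendsto_zero_of_eventually_le_mul_ofReal hC fun ε hε => ?_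
    obtain ⟨N, hN⟩ := hdiff (ε ^ r) (by positivity)
    filter_upwards [eventually_ge_atTop (max N 1)] with n hn
    refine ofReal_rpow_mul_lintegral_setLIntegral_le hp hconj (hUm n) (hVm n)
      (by exact_mod_cast le_of_max_le_right hn) hε.le
      ((measure_mono (hJsub n)).trans_eq volume_Icc) (hU n) (hV n) fun a ha => ?_
    simpa only [mul_one_div] using hN n (le_of_max_le_left hn) a ha

/-- Lemma 6, case (i): if `U_n`, `V_n` are processes on `J_n ⊆ [x₀, x₁]` with
uniformly bounded moments of order `q' = (p−1)r'` (where `1/r = 1 − 1/r'`) and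
`sup_{a∈J_n} E|U_n(a) − V_n(a)|^r = o(n^{−r/6})`, then
`∫_{J_n} |U_n(a)|^p da = ∫_{J_n} |V_n(a)|^p da + o_P(n^{−1/6})`. -/
theorem stmt_8 (x₀ x₁ : ℝ) (hx : x₀ < x₁) (p r r' : ℝ) (hp : 1 ≤ p) (hr : 1 < r)
    (hrr' : 1 / r = 1 - 1 / r')
    (J : ℕ → Set ℝ) (hJm : ∀ n, MeasurableSet (J n)) (hJsub : ∀ n, J n ⊆ Icc x₀ x₁)
    (Ω : Type) [MeasurableSpace Ω] (P : Measure Ω) (hP : IsProbabilityMeasure P)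
    (U V : ℕ → ℝ → Ω → ℝ)
    (hUm : ∀ n, Measurable (Function.uncurry (U n)))
    (hVm : ∀ n, Measurable (Function.uncurry (V n)))
    (K : ℝ)
    -- uniformly bounded moments of order `q' = (p−1) r'`
    (hU : ∀ n, ∀ a ∈ J n,
      ∫⁻ ω, ENNReal.ofReal (|U n a ω| ^ ((p - 1) * r')) ∂P ≤ ENNReal.ofReal K)
    (hV : ∀ n, ∀ a ∈ J n,
      ∫⁻ ω, ENNReal.ofReal (|V n a ω| ^ ((p - 1) * r')) ∂P ≤ ENNReal.ofReal K)
    -- `sup_{a∈J_n} E|U_n(a) − V_n(a)|^r = o(n^{−r/6})`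
    (hdiff : ∀ ε : ℝ, 0 < ε → ∃ N : ℕ, ∀ n : ℕ, N ≤ n → ∀ a ∈ J n,
      ∫⁻ ω, ENNReal.ofReal (|U n a ω - V n a ω| ^ r) ∂P ≤
        ENNReal.ofReal (ε * (n:ℝ) ^ (-r/6))) :
    ∀ ε : ℝ, 0 < ε →
      Tendsto (fun n : ℕ => P {ω | ε < (n:ℝ) ^ ((1:ℝ)/6) *
        |(∫ a in J n, |U n a ω| ^ p) - ∫ a in J n, |V n a ω| ^ p|}) atTop (nhds 0) :=
  stmt_8_general x₀ x₁ p r r' hp hr hrr' J hJsub Ω P hP U V hUm hVm K hU hV hdiff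
end
end

section
/- Let x₀ < x₁ be real numbers, and for each n let J_n ⊆ [x₀, x₁] be a measurable set and U_n, V_n be jointly measurable stochastic processes indexed by J_n. Let p ≥ 1, r > 1 and r' satisfy 1/r = 1 − 1/r', and set q' = p r'. Assume there exists K such that sup_{a∈J_n} E|U_n(a)|^{q'} ≤ K and sup_{a∈J_n} E|V_n(a)|^{q'} ≤ K for all n, and that there exist γ > r/6 and K' > 0 such that P(U_n(a) ≠ V_n(a)) ≤ K' n^{−γ} for every n and every a ∈ J_n. Then ∫_{J_n} |U_n(a)|^p da = ∫_{J_n} |V_n(a)|^p da + o_P(n^{−1/6}), i.e., for every ε > 0, P(n^{1/6} |∫_{J_n} |U_n(a)|^p da − ∫_{J_n} |V_n(a)|^p da| > ε) → 0 as n → ∞. -/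
/-!
By Markov's inequality it suffices that `n^{1/6} E|∫_J |U|^p - ∫_J |V|^p| → 0`, and by Tonelli
this expectation is at most `∫_J E||U(a)|^p - |V(a)|^p| da`. The integrand vanishes off
`{U(a) ≠ V(a)}`, so Hölder's inequality with exponents `r'`, `r` bounds it by
`(E||U(a)|^p - |V(a)|^p|^{r'})^{1/r'} P(U(a) ≠ V(a))^{1/r} ≤ (2K)^{1/r'} (K' n^{-γ})^{1/r}`,
using `|x - y|^{r'} ≤ x^{r'} + y^{r'}` for `x, y ≥ 0`. Hence the probability is
`O(n^{1/6 - γ/r})`, which tends to `0` because `γ > r/6`.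
-/

open MeasureTheory ProbabilityTheory Real Set Filter

open scoped ENNReal Topology

lemma abs_sub_rpow_le_rpow_add_rpow {a b s : ℝ} (ha : 0 ≤ a) (hb : 0 ≤ b) (hs : 0 ≤ s) :
    |a - b| ^ s ≤ a ^ s + b ^ s := by
  rcases le_total b a with hba | hab
  · have : |a - b| ^ s ≤ a ^ s :=
      rpow_le_rpow (abs_nonneg _) (by rw [abs_of_nonneg (by linarith)]; linarith) hs
    linarith [rpow_nonneg hb s]
  · have : |a - b| ^ s ≤ b ^ s :=
      rpow_le_rpow (abs_nonneg _) (by rw [abs_of_nonpos (by linarith)]; linarith) hs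
    linarith [rpow_nonneg ha s]

lemma enorm_abs_rpow_sub_abs_rpow_rpow_le (x y p : ℝ) {s : ℝ} (hs : 0 ≤ s) :
    ‖|x| ^ p - |y| ^ p‖ₑ ^ s ≤ ENNReal.ofReal (|x| ^ (p * s)) + ENNReal.ofReal (|y| ^ (p * s)) := by
  have hx := rpow_nonneg (abs_nonneg x) p
  have hy := rpow_nonneg (abs_nonneg y) p
  rw [Real.enorm_eq_ofReal_abs, ENNReal.ofReal_rpow_of_nonneg (abs_nonneg _) hs,
    ← ENNReal.ofReal_add (rpow_nonneg (abs_nonneg x) _) (rpow_nonneg (abs_nonneg y) _),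
    rpow_mul (abs_nonneg x), rpow_mul (abs_nonneg y)]
  exact ENNReal.ofReal_le_ofReal (abs_sub_rpow_le_rpow_add_rpow hx hy hs)

lemma enorm_integral_sub_le_lintegral_enorm_sub {α E : Type*} [MeasurableSpace α]
    [NormedAddCommGroup E] [NormedSpace ℝ E] {μ : Measure α} {f g : α → E}
    (hf : AEStronglyMeasurable f μ) (hg : AEStronglyMeasurable g μ) :
    ‖∫ x, f x ∂μ - ∫ x, g x ∂μ‖ₑ ≤ ∫⁻ x, ‖f x - g x‖ₑ ∂μ := by
  by_cases hfin : ∫⁻ x, ‖f x - g x‖ₑ ∂μ = ∞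
  · exact hfin ▸ le_top
  have hfg : Integrable (f - g) μ := ⟨hf.sub hg, Ne.lt_top hfin⟩
  by_cases hfi : Integrable f μ
  · have hgi : Integrable g μ := by simpa using hfi.sub hfg
    rw [← integral_sub hfi hgi]
    exact enorm_integral_le_lintegral_enorm _
  · -- as `f - g` is integrable, neither integral is defined and both are junk `0`
    have hgi : ¬ Integrable g μ := fun hgi ↦ hfi (by simpa using hfg.add hgi)
    simp [integral_undef hfi, integral_undef hgi]

lemma lintegral_enorm_integral_sub_le {α Ω E : Type*} [MeasurableSpace α] [MeasurableSpace Ω]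
    [NormedAddCommGroup E] [NormedSpace ℝ E] {ν : Measure α} [SFinite ν] {P : Measure Ω}
    [SFinite P] {f g : α → Ω → E} (hf : StronglyMeasurable (Function.uncurry f))
    (hg : StronglyMeasurable (Function.uncurry g)) :
    ∫⁻ ω, ‖∫ a, f a ω ∂ν - ∫ a, g a ω ∂ν‖ₑ ∂P ≤ ∫⁻ a, ∫⁻ ω, ‖f a ω - g a ω‖ₑ ∂P ∂ν := by
  calc ∫⁻ ω, ‖∫ a, f a ω ∂ν - ∫ a, g a ω ∂ν‖ₑ ∂P
      ≤ ∫⁻ ω, ∫⁻ a, ‖f a ω - g a ω‖ₑ ∂ν ∂P :=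
        lintegral_mono fun ω ↦ enorm_integral_sub_le_lintegral_enorm_sub
          (hf.comp_measurable measurable_prodMk_right).aestronglyMeasurable
          (hg.comp_measurable measurable_prodMk_right).aestronglyMeasurable
    _ = ∫⁻ a, ∫⁻ ω, ‖f a ω - g a ω‖ₑ ∂P ∂ν :=
        lintegral_lintegral_swap ((hf.sub hg).comp_measurable measurable_swap).enorm.aemeasurable

lemma lintegral_le_lintegral_rpow_mul_measure_rpow {Ω : Type*} [MeasurableSpace Ω]
    {μ : Measure Ω} {q r : ℝ} (hqr : q.HolderConjugate r) {F : Ω → ℝ≥0∞} (hF : AEMeasurable F μ)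
    {S : Set Ω} (hS : MeasurableSet S) (hFS : ∀ ω ∉ S, F ω = 0) :
    ∫⁻ ω, F ω ∂μ ≤ (∫⁻ ω, F ω ^ q ∂μ) ^ (1 / q) * μ S ^ (1 / r) := by
  have hF_eq : F = F * S.indicator 1 := by
    ext ω
    by_cases hω : ω ∈ S <;> simp [hω, hFS]
  have hind : ∫⁻ ω, S.indicator 1 ω ^ r ∂μ = μ S := by
    have : ∀ ω, S.indicator (1 : Ω → ℝ≥0∞) ω ^ r = S.indicator 1 ω := fun ω ↦ by
      by_cases hω : ω ∈ S <;> simp [hω, hqr.symm.pos]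
    simp_rw [this]
    exact lintegral_indicator_one hS
  calc ∫⁻ ω, F ω ∂μ = ∫⁻ ω, (F * S.indicator (1 : Ω → ℝ≥0∞)) ω ∂μ := by rw [← hF_eq]
    _ ≤ _ := ENNReal.lintegral_mul_le_Lp_mul_Lq μ hqr hF (aemeasurable_one.indicator hS)
    _ = _ := by rw [hind]

lemma lintegral_enorm_abs_rpow_sub_le {Ω : Type*} [MeasurableSpace Ω] {P : Measure Ω}
    {u v : Ω → ℝ} (hu : Measurable u) (hv : Measurable v) (p : ℝ) {q r : ℝ}
    (hqr : q.HolderConjugate r) :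
    ∫⁻ ω, ‖|u ω| ^ p - |v ω| ^ p‖ₑ ∂P ≤
      (∫⁻ ω, ENNReal.ofReal (|u ω| ^ (p * q)) ∂P + ∫⁻ ω, ENNReal.ofReal (|v ω| ^ (p * q)) ∂P)
        ^ (1 / q) * P {ω | u ω ≠ v ω} ^ (1 / r) := by
  calc ∫⁻ ω, ‖|u ω| ^ p - |v ω| ^ p‖ₑ ∂P
      ≤ (∫⁻ ω, ‖|u ω| ^ p - |v ω| ^ p‖ₑ ^ q ∂P) ^ (1 / q) * P {ω | u ω ≠ v ω} ^ (1 / r) :=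
        lintegral_le_lintegral_rpow_mul_measure_rpow hqr (by fun_prop)
          (measurableSet_eq_fun hu hv).compl fun ω hω ↦ by simp [not_not.mp hω]
    _ ≤ _ := by
        refine mul_le_mul_left (ENNReal.rpow_le_rpow ?_ (one_div_nonneg.2 hqr.nonneg)) _
        rw [← lintegral_add_left (by fun_prop)]
        exact lintegral_mono fun ω ↦ enorm_abs_rpow_sub_abs_rpow_rpow_le _ _ _ hqr.nonneg

lemma lintegral_enorm_setIntegral_abs_rpow_sub_le {α Ω : Type*} [MeasurableSpace α]
    [MeasurableSpace Ω] {ν : Measure α} [SFinite ν] {P : Measure Ω} [SFinite P] {J : Set α}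
    (hJ : MeasurableSet J) {U V : α → Ω → ℝ} (hU : Measurable (Function.uncurry U))
    (hV : Measurable (Function.uncurry V)) (p : ℝ) {q r : ℝ} (hqr : q.HolderConjugate r)
    {M δ : ℝ≥0∞} (hUM : ∀ a ∈ J, ∫⁻ ω, ENNReal.ofReal (|U a ω| ^ (p * q)) ∂P ≤ M)
    (hVM : ∀ a ∈ J, ∫⁻ ω, ENNReal.ofReal (|V a ω| ^ (p * q)) ∂P ≤ M)
    (hδ : ∀ a ∈ J, P {ω | U a ω ≠ V a ω} ≤ δ) :
    ∫⁻ ω, ‖∫ a in J, |U a ω| ^ p ∂ν - ∫ a in J, |V a ω| ^ p ∂ν‖ₑ ∂P ≤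
      ν J * ((2 * M) ^ (1 / q) * δ ^ (1 / r)) := by
  have hUp : Measurable (Function.uncurry fun a ω ↦ |U a ω| ^ p) := hU.abs.pow_const p
  have hVp : Measurable (Function.uncurry fun a ω ↦ |V a ω| ^ p) := hV.abs.pow_const p
  calc ∫⁻ ω, ‖∫ a in J, |U a ω| ^ p ∂ν - ∫ a in J, |V a ω| ^ p ∂ν‖ₑ ∂P
      ≤ ∫⁻ a in J, ∫⁻ ω, ‖|U a ω| ^ p - |V a ω| ^ p‖ₑ ∂P ∂ν :=
        lintegral_enorm_integral_sub_le hUp.stronglyMeasurable hVp.stronglyMeasurable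
    _ ≤ ∫⁻ _ in J, (2 * M) ^ (1 / q) * δ ^ (1 / r) ∂ν := by
        refine setLIntegral_mono' hJ fun a ha ↦ ?_
        refine (lintegral_enorm_abs_rpow_sub_le (hU.comp measurable_prodMk_left)
          (hV.comp measurable_prodMk_left) p hqr).trans ?_
        rw [two_mul]
        exact mul_le_mul' (ENNReal.rpow_le_rpow (add_le_add (hUM a ha) (hVM a ha))
          (one_div_nonneg.2 hqr.nonneg))
          (ENNReal.rpow_le_rpow (hδ a ha) (one_div_nonneg.2 hqr.symm.nonneg))
    _ = ν J * ((2 * M) ^ (1 / q) * δ ^ (1 / r)) := by rw [setLIntegral_const, mul_comm]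

lemma tendsto_measure_lt_mul_abs_of_lintegral_le {Ω : Type*} [MeasurableSpace Ω]
    {P : Measure Ω} {X : ℕ → Ω → ℝ} (hX : ∀ n, AEMeasurable (X n) P) {c : ℕ → ℝ}
    (hc : ∀ n, 0 ≤ c n) {M : ℝ≥0∞} (hM : M ≠ ∞) {β : ℕ → ℝ≥0∞}
    (hXβ : ∀ n, ∫⁻ ω, ‖X n ω‖ₑ ∂P ≤ M * β n)
    (hcβ : Tendsto (fun n ↦ ENNReal.ofReal (c n) * β n) atTop (𝓝 0)) {ε : ℝ} (hε : 0 < ε) :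
    Tendsto (fun n ↦ P {ω | ε < c n * |X n ω|}) atTop (𝓝 0) := by
  have hε' : ENNReal.ofReal ε ≠ 0 := by simpa using hε
  have markov : ∀ n, P {ω | ε < c n * |X n ω|} ≤
      M * (ENNReal.ofReal (c n) * β n) / ENNReal.ofReal ε := fun n ↦ calc
    P {ω | ε < c n * |X n ω|} ≤ P {ω | ENNReal.ofReal ε ≤ ENNReal.ofReal (c n) * ‖X n ω‖ₑ} :=
        measure_mono fun ω (hω : ε < c n * |X n ω|) ↦ by
          show ENNReal.ofReal ε ≤ ENNReal.ofReal (c n) * ‖X n ω‖ₑ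
          rw [Real.enorm_eq_ofReal_abs, ← ENNReal.ofReal_mul (hc n)]
          exact ENNReal.ofReal_le_ofReal (le_of_lt hω)
    _ ≤ (∫⁻ ω, ENNReal.ofReal (c n) * ‖X n ω‖ₑ ∂P) / ENNReal.ofReal ε :=
        meas_ge_le_lintegral_div (by fun_prop) hε' ENNReal.ofReal_ne_top
    _ ≤ ENNReal.ofReal (c n) * (M * β n) / ENNReal.ofReal ε := by
        rw [lintegral_const_mul' _ _ ENNReal.ofReal_ne_top]
        gcongr
        exact hXβ n
    _ = M * (ENNReal.ofReal (c n) * β n) / ENNReal.ofReal ε := by rw [mul_left_comm]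
  have hbound : Tendsto (fun n ↦ M * (ENNReal.ofReal (c n) * β n) / ENNReal.ofReal ε)
      atTop (𝓝 0) := by
    simpa using ENNReal.Tendsto.div_const (ENNReal.Tendsto.const_mul hcβ (Or.inr hM)) (Or.inr hε')
  exact tendsto_of_tendsto_of_tendsto_of_le_of_le tendsto_const_nhds hbound
    (fun _ ↦ zero_le) markov

lemma tendsto_rpow_mul_rpow_mul_rpow_neg {s γ r K : ℝ} (hK : 0 ≤ K) (hsγ : s < γ / r) :
    Tendsto (fun n : ℕ ↦ (n : ℝ) ^ s * (K * (n : ℝ) ^ (-γ)) ^ (1 / r)) atTop (𝓝 0) := by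
  have hlim : Tendsto (fun n : ℕ ↦ K ^ (1 / r) * (n : ℝ) ^ (-(γ / r - s))) atTop (𝓝 0) := by
    simpa using ((tendsto_rpow_neg_atTop (sub_pos.2 hsγ)).comp
      tendsto_natCast_atTop_atTop).const_mul (K ^ (1 / r))
  refine hlim.congr' ?_
  filter_upwards [eventually_gt_atTop 0] with n hn
  have hn' : (0 : ℝ) < n := Nat.cast_pos.2 hn
  rw [mul_rpow hK (rpow_nonneg hn'.le _), ← rpow_mul hn'.le,
    show -(γ / r - s) = s + -γ * (1 / r) by ring, rpow_add hn']
  ring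

theorem stmt_9_general (x₀ x₁ : ℝ) (p r r' : ℝ) (hr : 1 < r)
    (hrr' : 1 / r = 1 - 1 / r')
    (J : ℕ → Set ℝ) (hJm : ∀ n, MeasurableSet (J n)) (hJsub : ∀ n, J n ⊆ Icc x₀ x₁)
    (Ω : Type) [MeasurableSpace Ω] (P : Measure Ω) (hP : IsProbabilityMeasure P)
    (U V : ℕ → ℝ → Ω → ℝ)
    (hUm : ∀ n, Measurable (Function.uncurry (U n)))
    (hVm : ∀ n, Measurable (Function.uncurry (V n)))
    (K : ℝ)
    -- uniformly bounded moments of order `q' = p r'`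
    (hU : ∀ n, ∀ a ∈ J n,
      ∫⁻ ω, ENNReal.ofReal (|U n a ω| ^ (p * r')) ∂P ≤ ENNReal.ofReal K)
    (hV : ∀ n, ∀ a ∈ J n,
      ∫⁻ ω, ENNReal.ofReal (|V n a ω| ^ (p * r')) ∂P ≤ ENNReal.ofReal K)
    -- `P(U_n(a) ≠ V_n(a)) ≤ K' n^{−γ}` with `γ > r/6`
    (γ K' : ℝ) (hγ : r / 6 < γ) (hK' : 0 < K')
    (hne : ∀ n : ℕ, ∀ a ∈ J n,
      P {ω | U n a ω ≠ V n a ω} ≤ ENNReal.ofReal (K' * (n:ℝ) ^ (-γ))) :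
    ∀ ε : ℝ, 0 < ε →
      Tendsto (fun n : ℕ => P {ω | ε < (n:ℝ) ^ ((1:ℝ)/6) *
        |(∫ a in J n, |U n a ω| ^ p) - ∫ a in J n, |V n a ω| ^ p|}) atTop (nhds 0) := by
  intro ε hε
  have hr0 : 0 < r := one_pos.trans hr
  have hconj : r'.HolderConjugate r := by
    have h := Real.holderConjugate_one_div (a := 1 / r') (b := 1 / r)
      (by linarith [(div_lt_one hr0).2 hr]) (by positivity) (by linarith)
    simpa using h
  have hD : ∀ n, Measurable fun ω ↦ (∫ a in J n, |U n a ω| ^ p) - ∫ a in J n, |V n a ω| ^ p :=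
    fun n ↦ ((hUm n).abs.pow_const p).stronglyMeasurable.integral_prod_left'.measurable.sub
      ((hVm n).abs.pow_const p).stronglyMeasurable.integral_prod_left'.measurable
  refine tendsto_measure_lt_mul_abs_of_lintegral_le (fun n ↦ (hD n).aemeasurable)
    (M := volume (Icc x₀ x₁) * (2 * ENNReal.ofReal K) ^ (1 / r'))
    (β := fun n ↦ ENNReal.ofReal (K' * (n : ℝ) ^ (-γ)) ^ (1 / r))
    (fun n ↦ rpow_nonneg n.cast_nonneg _)
    (ENNReal.mul_ne_top measure_Icc_lt_top.ne (ENNReal.rpow_ne_top_of_nonneg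
      (one_div_nonneg.2 hconj.nonneg) (ENNReal.mul_ne_top (by simp) ENNReal.ofReal_ne_top)))
    (fun n ↦ ?_) ?_ hε
  · refine (lintegral_enorm_setIntegral_abs_rpow_sub_le (hJm n) (hUm n) (hVm n) p hconj
      (hU n) (hV n) (hne n)).trans ?_
    rw [mul_assoc]
    exact mul_le_mul_left (measure_mono (hJsub n)) _
  · have hlim := ENNReal.tendsto_ofReal (tendsto_rpow_mul_rpow_mul_rpow_neg hK'.le
      (show 1 / 6 < γ / r by rw [lt_div_iff₀ hr0]; linarith))
    rw [ENNReal.ofReal_zero] at hlim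
    refine hlim.congr fun n ↦ ?_
    rw [ENNReal.ofReal_mul (rpow_nonneg n.cast_nonneg _),
      ENNReal.ofReal_rpow_of_nonneg (by positivity) (by positivity)]

/-- Lemma 6, case (ii): if `U_n`, `V_n` are processes on `J_n ⊆ [x₀, x₁]` with
uniformly bounded moments of order `q' = p r'` (where `1/r = 1 − 1/r'`) and
`P(U_n(a) ≠ V_n(a)) ≤ K' n^{−γ}` for some `γ > r/6`, then
`∫_{J_n} |U_n(a)|^p da = ∫_{J_n} |V_n(a)|^p da + o_P(n^{−1/6})`. -/
theorem stmt_9 (x₀ x₁ : ℝ) (hx : x₀ < x₁) (p r r' : ℝ) (hp : 1 ≤ p) (hr : 1 < r)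
    (hrr' : 1 / r = 1 - 1 / r')
    (J : ℕ → Set ℝ) (hJm : ∀ n, MeasurableSet (J n)) (hJsub : ∀ n, J n ⊆ Icc x₀ x₁)
    (Ω : Type) [MeasurableSpace Ω] (P : Measure Ω) (hP : IsProbabilityMeasure P)
    (U V : ℕ → ℝ → Ω → ℝ)
    (hUm : ∀ n, Measurable (Function.uncurry (U n)))
    (hVm : ∀ n, Measurable (Function.uncurry (V n)))
    (K : ℝ)
    -- uniformly bounded moments of order `q' = p r'`
    (hU : ∀ n, ∀ a ∈ J n,
      ∫⁻ ω, ENNReal.ofReal (|U n a ω| ^ (p * r')) ∂P ≤ ENNReal.ofReal K)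
    (hV : ∀ n, ∀ a ∈ J n,
      ∫⁻ ω, ENNReal.ofReal (|V n a ω| ^ (p * r')) ∂P ≤ ENNReal.ofReal K)
    -- `P(U_n(a) ≠ V_n(a)) ≤ K' n^{−γ}` with `γ > r/6`
    (γ K' : ℝ) (hγ : r / 6 < γ) (hK' : 0 < K')
    (hne : ∀ n : ℕ, ∀ a ∈ J n,
      P {ω | U n a ω ≠ V n a ω} ≤ ENNReal.ofReal (K' * (n:ℝ) ^ (-γ))) :
    ∀ ε : ℝ, 0 < ε →
      Tendsto (fun n : ℕ => P {ω | ε < (n:ℝ) ^ ((1:ℝ)/6) *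
        |(∫ a in J n, |U n a ω| ^ p) - ∫ a in J n, |V n a ω| ^ p|}) atTop (nhds 0) :=
  stmt_9_general x₀ x₁ p r r' hr hrr' J hJm hJsub Ω P hP U V hUm hVm K hU hV γ K' hγ hK' hne
end

section
/- Let c > 0 and let λ : [0,1] → ℝ be differentiable with λ'(t) ≤ −2c for all t ∈ [0,1]. Set Λ(t) = ∫₀^t λ(u) du and let g be the generalized inverse of λ. Then for every a ∈ ℝ and every u ∈ [0,1], Λ(u) − Λ(g(a)) ≤ (u − g(a)) a − c (u − g(a))². -/
/-!
Since `λ' ≤ -2c`, the function `t ↦ λ t + 2c t` is antitone, so `λ` decreases at least at slope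
`2c`. At `g = g(a)` continuity gives `λ g ≤ a` (if `g < 1`) and `a ≤ λ g` (if `0 < g`). Hence
`λ v ≤ a - 2c (v - g)` to the right of `g` and `λ v ≥ a - 2c (v - g)` to the left of it, and
integrating this comparison between `g` and `u` gives the claim, the right-hand side being
`∫_g^u (a - 2c (v - g)) dv`.
-/

open MeasureTheory ProbabilityTheory Real Set Filter

noncomputable section

/-- Generalized inverse of a nonincreasing function on `[0,1]`:
`ginv lam a` is the greatest `t ∈ [0,1]` with `lam t ≥ a` (and `0` if no such `t` exists,
by the real `sSup` junk-value convention). -/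
def ginv (lam : ℝ → ℝ) (a : ℝ) : ℝ := sSup {t : ℝ | t ∈ Icc (0:ℝ) 1 ∧ a ≤ lam t}

theorem antitoneOn_add_mul_of_hasDerivAt {D : Set ℝ} (hD : Convex ℝ D) {f f' : ℝ → ℝ} {k : ℝ}
    (hf : ∀ t ∈ D, HasDerivAt f (f' t) t) (hf' : ∀ t ∈ D, f' t ≤ -k) :
    AntitoneOn (fun t => f t + k * t) D := by
  have hderiv : ∀ t ∈ D, HasDerivAt (fun t => f t + k * t) (f' t + k) t := fun t ht => by
    have h := (hf t ht).add ((hasDerivAt_id' t).const_mul k)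
    rwa [mul_one] at h
  refine antitoneOn_of_hasDerivWithinAt_nonpos hD
    (fun t ht => (hderiv t ht).continuousAt.continuousWithinAt)
    (fun t ht => (hderiv t (interior_subset ht)).hasDerivWithinAt) fun t ht => ?_
  linarith [hf' t (interior_subset ht)]

theorem integral_sub_two_mul_sub (a k g u : ℝ) :
    ∫ v in g..u, (a - 2 * k * (v - g)) = (u - g) * a - k * (u - g) ^ 2 := by
  rw [intervalIntegral.integral_comp_sub_right (fun x => a - 2 * k * x),
    intervalIntegral.integral_sub (f := fun _ => a) (g := fun x => 2 * k * x)
      intervalIntegrable_const ((continuous_const.mul continuous_id).intervalIntegrable _ _),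
    intervalIntegral.integral_const_mul, integral_id, intervalIntegral.integral_const]
  simp only [smul_eq_mul, sub_self]
  ring

section GeneralizedInverse

variable {lam : ℝ → ℝ} {a : ℝ}

theorem ginv_mem_Icc (lam : ℝ → ℝ) (a : ℝ) : ginv lam a ∈ Icc (0 : ℝ) 1 := by
  rcases eq_empty_or_nonempty {t : ℝ | t ∈ Icc (0 : ℝ) 1 ∧ a ≤ lam t} with h | ⟨t, ht⟩
  · rw [ginv, h, Real.sSup_empty]
    exact left_mem_Icc.mpr zero_le_one
  · exact ⟨ht.1.1.trans (le_csSup ⟨1, fun s hs => hs.1.2⟩ ht),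
      csSup_le ⟨t, ht⟩ fun s hs => hs.1.2⟩

theorem le_apply_ginv (hcont : ContinuousOn lam (Icc 0 1)) (hg : 0 < ginv lam a) :
    a ≤ lam (ginv lam a) := by
  have hne : {t : ℝ | t ∈ Icc (0 : ℝ) 1 ∧ a ≤ lam t}.Nonempty := by
    by_contra h
    rw [ginv, not_nonempty_iff_eq_empty.mp h, Real.sSup_empty] at hg
    exact hg.false
  have hclosed : IsClosed {t : ℝ | t ∈ Icc (0 : ℝ) 1 ∧ a ≤ lam t} :=
    hcont.preimage_isClosed_of_isClosed isClosed_Icc isClosed_Ici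
  exact (hclosed.csSup_mem hne ⟨1, fun s hs => hs.1.2⟩).2

theorem apply_ginv_le (hcont : ContinuousOn lam (Icc 0 1)) (hg : ginv lam a < 1) :
    lam (ginv lam a) ≤ a := by
  set g := ginv lam a
  have hg0 := (ginv_mem_Icc lam a).1
  have hright : lam '' Ioc g 1 ⊆ Iic a := by
    rintro _ ⟨t, ht, rfl⟩
    by_contra hlt
    have hle : t ≤ g := le_csSup ⟨1, fun s hs => hs.1.2⟩
      ⟨⟨hg0.trans ht.1.le, ht.2⟩, le_of_lt (not_le.mp hlt)⟩
    exact hle.not_gt ht.1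
  have hmem : lam g ∈ closure (lam '' Ioc g 1) :=
    ((hcont g ⟨hg0, hg.le⟩).mono (Ioc_subset_Icc_self.trans (Icc_subset_Icc hg0 le_rfl))
      ).mem_closure_image (by rw [closure_Ioc hg.ne]; exact left_mem_Icc.mpr hg.le)
  exact closure_minimal hright isClosed_Iic hmem

theorem apply_le_of_ginv_le (hcont : ContinuousOn lam (Icc 0 1)) {k : ℝ}
    (hanti : AntitoneOn (fun t => lam t + k * t) (Icc 0 1)) (hg : ginv lam a < 1) {v : ℝ}
    (hv : v ∈ Icc (ginv lam a) 1) : lam v ≤ a - k * (v - ginv lam a) := by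
  have hg0 := (ginv_mem_Icc lam a).1
  have := hanti ⟨hg0, hg.le⟩ ⟨hg0.trans hv.1, hv.2⟩ hv.1
  linarith [apply_ginv_le hcont hg]

theorem le_apply_of_le_ginv (hcont : ContinuousOn lam (Icc 0 1)) {k : ℝ}
    (hanti : AntitoneOn (fun t => lam t + k * t) (Icc 0 1)) (hg : 0 < ginv lam a) {v : ℝ}
    (hv : v ∈ Icc 0 (ginv lam a)) : a - k * (v - ginv lam a) ≤ lam v := by
  have hg1 := (ginv_mem_Icc lam a).2
  have := hanti ⟨hv.1, hv.2.trans hg1⟩ ⟨hg.le, hg1⟩ hv.2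
  linarith [le_apply_ginv hcont hg]

end GeneralizedInverse

theorem stmt_11_general (c : ℝ) (lam lam' : ℝ → ℝ)
    (hderiv : ∀ t ∈ Icc (0:ℝ) 1, HasDerivAt lam (lam' t) t)
    (hlam' : ∀ t ∈ Icc (0:ℝ) 1, lam' t ≤ -(2 * c)) :
    ∀ a : ℝ, ∀ u ∈ Icc (0:ℝ) 1,
      (∫ v in (0:ℝ)..u, lam v) - (∫ v in (0:ℝ)..(ginv lam a), lam v) ≤
        (u - ginv lam a) * a - c * (u - ginv lam a) ^ 2 := by
  intro a u hu
  set g := ginv lam a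
  have hg : g ∈ Icc (0:ℝ) 1 := ginv_mem_Icc lam a
  have h0 : (0:ℝ) ∈ Icc (0:ℝ) 1 := left_mem_Icc.mpr zero_le_one
  have hcont : ContinuousOn lam (Icc 0 1) := fun t ht =>
    (hderiv t ht).continuousAt.continuousWithinAt
  have hanti := antitoneOn_add_mul_of_hasDerivAt (convex_Icc 0 1) hderiv hlam'
  have hint : ∀ x ∈ Icc (0:ℝ) 1, ∀ y ∈ Icc (0:ℝ) 1, IntervalIntegrable lam volume x y :=
    fun x hx y hy => (hcont.mono (uIcc_subset_Icc hx hy)).intervalIntegrable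
  have hint_affine : ∀ x y : ℝ, IntervalIntegrable (fun v => a - 2 * c * (v - g)) volume x y :=
    fun x y => (by fun_prop : Continuous fun v => a - 2 * c * (v - g)).intervalIntegrable x y
  rw [intervalIntegral.integral_interval_sub_left (hint 0 h0 u hu) (hint 0 h0 g hg),
    ← integral_sub_two_mul_sub]
  rcases lt_trichotomy g u with hgu | rfl | hug
  · exact intervalIntegral.integral_mono_on hgu.le (hint g hg u hu) (hint_affine g u)
      fun v hv => apply_le_of_ginv_le hcont hanti (hgu.trans_le hu.2) ⟨hv.1, hv.2.trans hu.2⟩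
  · simp
  · rw [intervalIntegral.integral_symm, intervalIntegral.integral_symm u, neg_le_neg_iff]
    exact intervalIntegral.integral_mono_on hug.le (hint_affine u g) (hint u hu g hg)
      fun v hv => le_apply_of_le_ginv hcont hanti (hu.1.trans_lt hug) ⟨hu.1.trans hv.1, hv.2⟩

/-- if `λ' ≤ -2c` on `[0,1]` then, with `Λ(t) = ∫₀ᵗ λ` and `g` the generalized
inverse of `λ`, one has `Λ(u) − Λ(g(a)) ≤ (u − g(a)) a − c (u − g(a))²` for all `a ∈ ℝ` and
`u ∈ [0,1]`. -/
theorem stmt_11 (c : ℝ) (hc : 0 < c) (lam lam' : ℝ → ℝ)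
    (hderiv : ∀ t ∈ Icc (0:ℝ) 1, HasDerivAt lam (lam' t) t)
    (hlam' : ∀ t ∈ Icc (0:ℝ) 1, lam' t ≤ -(2 * c)) :
    ∀ a : ℝ, ∀ u ∈ Icc (0:ℝ) 1,
      (∫ v in (0:ℝ)..u, lam v) - (∫ v in (0:ℝ)..(ginv lam a), lam v) ≤
        (u - ginv lam a) * a - c * (u - ginv lam a) ^ 2 :=
  stmt_11_general c lam lam' hderiv hlam'
end
end

section
/- Let λ : [0,1] → ℝ be nonincreasing and differentiable with 0 < inf_t |λ'(t)| and sup_t |λ'(t)| < ∞, and assume |λ'(t) − λ'(x)| ≤ C'|t − x|^s for all t, x ∈ [0,1], for some C' > 0 and s ∈ (0,1]. Let p ≥ 1 and let g be the generalized inverse of λ. Then there exists K > 0, depending only on λ, C', s and p, such that |(b − λ(t))^{p−1} − ((g(b) − t) λ'(g(b)))^{p−1}| ≤ K (t − g(b))^{p−1+s} for all b ∈ (λ(1), λ(0)) and all t ∈ (g(b), 1). -/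
open MeasureTheory ProbabilityTheory Real Set Filter Topology

noncomputable section

/-- Basic properties of the generalized inverse at an interior value. -/
lemma ginv_spec (lam : ℝ → ℝ) (hcont : ∀ t ∈ Icc (0:ℝ) 1, ContinuousAt lam t)
    (b : ℝ) (hb1 : lam 1 < b) (hb0 : b < lam 0) :
    ginv lam b ∈ Icc (0:ℝ) 1 ∧ lam (ginv lam b) = b := by
  set S : Set ℝ := {t : ℝ | t ∈ Icc (0:ℝ) 1 ∧ b ≤ lam t} with hS
  have hSsub : S ⊆ Icc (0:ℝ) 1 := fun x hx => hx.1
  have hSne : S.Nonempty := ⟨0, ⟨le_refl 0, zero_le_one⟩, hb0.le⟩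
  have hSbdd : BddAbove S := ⟨1, fun x hx => hx.1.2⟩
  have hSclosed : IsClosed S := by
    have : S = Icc (0:ℝ) 1 ∩ lam ⁻¹' (Ici b) := by
      ext x; simp [hS, Set.mem_setOf_eq, and_comm]
    rw [this]
    exact ContinuousOn.preimage_isClosed_of_isClosed
      (fun x hx => (hcont x hx).continuousWithinAt) isClosed_Icc isClosed_Ici
  have hmem : ginv lam b ∈ S := hSclosed.csSup_mem hSne hSbdd
  refine ⟨hmem.1, le_antisymm ?_ hmem.2⟩
  by_contra h
  push_neg at h
  -- h : b < lam (ginv lam b)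
  set g := ginv lam b with hg
  have hg1 : g < 1 := lt_of_le_of_ne hmem.1.2 (by
    intro heq; rw [heq] at h; exact absurd h (not_lt.mpr hb1.le))
  have hev : ∀ᶠ τ in 𝓝[>] g, b < lam τ :=
    eventually_nhdsWithin_of_eventually_nhds
      ((hcont g hmem.1).eventually (eventually_gt_nhds h))
  have hev2 : ∀ᶠ τ in 𝓝[>] g, τ ∈ Ioc g 1 :=
    eventually_of_mem (Ioc_mem_nhdsGT_of_mem ⟨le_rfl, hg1⟩) (fun x hx => hx)
  obtain ⟨τ, hτb, hτmem⟩ := (hev.and hev2).exists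
  have : τ ≤ g := le_csSup hSbdd ⟨⟨hmem.1.1.trans hτmem.1.le, hτmem.2⟩, hτb.le⟩
  exact absurd hτmem.1 (not_lt.mpr this)

/-- Mean-value estimate for differences of real powers on a positive interval. -/
lemma rpow_diff_le_aux (q lo hi a c : ℝ) (hq : 0 < q) (hlo : 0 < lo)
    (ha : a ∈ Icc lo hi) (hc : c ∈ Icc lo hi) (hac : c ≤ a) :
    a ^ q - c ^ q ≤ q * max (lo ^ (q - 1)) (hi ^ (q - 1)) * (a - c) := by
  rcases eq_or_lt_of_le hac with rfl | hlt
  · simp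
  · have hcpos : 0 < c := hlo.trans_le hc.1
    obtain ⟨x, hx, hxslope⟩ := exists_hasDerivAt_eq_slope (fun y => y ^ q)
      (fun y => q * y ^ (q - 1)) hlt
      (fun y hy => (Real.continuousAt_rpow_const y q
        (Or.inl (ne_of_gt (hcpos.trans_le hy.1)))).continuousWithinAt)
      (fun y hy => Real.hasDerivAt_rpow_const (Or.inl (ne_of_gt (hcpos.trans hy.1))))
    have hxpos : 0 < x := hcpos.trans hx.1
    have hxlo : lo ≤ x := hc.1.trans hx.1.le
    have hxhi : x ≤ hi := hx.2.le.trans ha.2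
    have hbound : x ^ (q - 1) ≤ max (lo ^ (q - 1)) (hi ^ (q - 1)) := by
      rcases le_or_gt 1 q with h1 | h1
      · exact le_max_of_le_right (Real.rpow_le_rpow hxpos.le hxhi (by linarith))
      · exact le_max_of_le_left (Real.rpow_le_rpow_of_nonpos hlo hxlo (by linarith))
    have heq : a ^ q - c ^ q = q * x ^ (q - 1) * (a - c) :=
      ((div_eq_iff (sub_ne_zero.mpr (ne_of_gt hlt))).mp hxslope.symm)
    rw [heq]
    have h1 : 0 ≤ a - c := by linarith
    have h2 : (0:ℝ) ≤ x ^ (q - 1) := (Real.rpow_pos_of_pos hxpos _).le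
    exact mul_le_mul_of_nonneg_right (mul_le_mul_of_nonneg_left hbound hq.le) h1

lemma rpow_diff_le (q lo hi a c : ℝ) (hq : 0 < q) (hlo : 0 < lo)
    (ha : a ∈ Icc lo hi) (hc : c ∈ Icc lo hi) :
    |a ^ q - c ^ q| ≤ q * max (lo ^ (q - 1)) (hi ^ (q - 1)) * |a - c| := by
  rcases le_total c a with h | h
  · rw [abs_of_nonneg (by
        have := Real.rpow_le_rpow (hlo.trans_le hc.1).le h hq.le; linarith),
      abs_of_nonneg (by linarith)]
    exact rpow_diff_le_aux q lo hi a c hq hlo ha hc h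
  · rw [abs_sub_comm, abs_sub_comm a c,
      abs_of_nonneg (by
        have := Real.rpow_le_rpow (hlo.trans_le ha.1).le h hq.le; linarith),
      abs_of_nonneg (by linarith)]
    exact rpow_diff_le_aux q lo hi c a hq hlo hc ha h

/-- for `λ` nonincreasing and differentiable with `0 < inf |λ'|`,
`sup |λ'| < ∞` and `λ'` Hölder of order `s`, and `p ≥ 1`, there is `K > 0` with
`|(b − λ(t))^{p−1} − ((g(b) − t) λ'(g(b)))^{p−1}| ≤ K (t − g(b))^{p−1+s}`
for all `b ∈ (λ(1), λ(0))` and `t ∈ (g(b), 1)`. -/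
theorem stmt_12 (lam lam' : ℝ → ℝ) (hanti : AntitoneOn lam (Icc 0 1))
    (hderiv : ∀ t ∈ Icc (0:ℝ) 1, HasDerivAt lam (lam' t) t)
    (c₀ : ℝ) (hc₀ : 0 < c₀) (hlow : ∀ t ∈ Icc (0:ℝ) 1, c₀ ≤ |lam' t|)
    (Cb : ℝ) (hub : ∀ t ∈ Icc (0:ℝ) 1, |lam' t| ≤ Cb)
    (C' s : ℝ) (hC' : 0 < C') (hs0 : 0 < s) (hs1 : s ≤ 1)
    (hHolder : ∀ t ∈ Icc (0:ℝ) 1, ∀ x ∈ Icc (0:ℝ) 1, |lam' t - lam' x| ≤ C' * |t - x| ^ s)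
    (p : ℝ) (hp : 1 ≤ p) :
    ∃ K : ℝ, 0 < K ∧ ∀ b : ℝ, lam 1 < b → b < lam 0 →
      ∀ t : ℝ, ginv lam b < t → t < 1 →
        |(b - lam t) ^ (p - 1) - ((ginv lam b - t) * lam' (ginv lam b)) ^ (p - 1)| ≤
          K * (t - ginv lam b) ^ (p - 1 + s) := by
  have hcont : ∀ t ∈ Icc (0:ℝ) 1, ContinuousAt lam t :=
    fun t ht => (hderiv t ht).continuousAt
  set D : ℝ := max (c₀ ^ (p - 2)) (Cb ^ (p - 2)) with hD
  refine ⟨max ((p - 1) * D * C') 1, lt_of_lt_of_le one_pos (le_max_right _ _), ?_⟩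
  intro b hb1 hb0 t hgt ht1
  obtain ⟨hgmem, hlamg⟩ := ginv_spec lam hcont b hb1 hb0
  set g := ginv lam b with hgdef
  have hg0 : (0:ℝ) ≤ g := hgmem.1
  have hg1 : g < 1 := hgt.trans ht1
  have htmem : t ∈ Icc (0:ℝ) 1 := ⟨hg0.trans hgt.le, ht1.le⟩
  have hu : 0 < t - g := by linarith
  -- MVT for lam on [g, t]
  obtain ⟨ξ, hξ, hξslope⟩ := exists_hasDerivAt_eq_slope lam lam' hgt
    (fun x hx => (hcont x ⟨hg0.trans hx.1, hx.2.trans ht1.le⟩).continuousWithinAt)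
    (fun x hx => hderiv x ⟨hg0.trans hx.1.le, hx.2.le.trans ht1.le⟩)
  have hξmem : ξ ∈ Icc (0:ℝ) 1 := ⟨hg0.trans hξ.1.le, hξ.2.le.trans ht1.le⟩
  -- sign of lam' ξ
  have hlamtg : lam t ≤ lam g := hanti hgmem htmem hgt.le
  have hξnonpos : lam' ξ ≤ 0 := by
    rw [hξslope]
    exact div_nonpos_of_nonpos_of_nonneg (by linarith) hu.le
  have hξlow : c₀ ≤ -lam' ξ := by
    have := hlow ξ hξmem; rwa [abs_of_nonpos hξnonpos] at this
  have hξhi : -lam' ξ ≤ Cb := by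
    have := hub ξ hξmem; rwa [abs_of_nonpos hξnonpos] at this
  -- sign of lam' g
  have hgnonpos : lam' g ≤ 0 := by
    have hds : Tendsto (slope lam g) (𝓝[>] g) (𝓝 (lam' g)) := by
      have h1 : HasDerivWithinAt lam (lam' g) (Ioi g) g :=
        (hderiv g hgmem).hasDerivWithinAt
      rw [hasDerivWithinAt_iff_tendsto_slope] at h1
      rwa [Set.diff_singleton_eq_self (notMem_Ioi.mpr le_rfl)] at h1
    refine le_of_tendsto hds ?_
    filter_upwards [Ioc_mem_nhdsGT_of_mem (⟨le_rfl, hg1⟩ : g ∈ Ico g 1)] with τ hτ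
    have hτmem : τ ∈ Icc (0:ℝ) 1 := ⟨hg0.trans hτ.1.le, hτ.2⟩
    have : lam τ ≤ lam g := hanti hgmem hτmem hτ.1.le
    rw [slope_def_field]
    exact div_nonpos_of_nonpos_of_nonneg (by linarith) (by linarith [hτ.1])
  have hglow : c₀ ≤ -lam' g := by
    have := hlow g hgmem; rwa [abs_of_nonpos hgnonpos] at this
  have hghi : -lam' g ≤ Cb := by
    have := hub g hgmem; rwa [abs_of_nonpos hgnonpos] at this
  -- the two quantities
  set u : ℝ := t - g with hudef
  have hA : b - lam t = (-lam' ξ) * u := by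
    have h5 : lam' ξ * u = lam t - lam g := by
      rw [hξslope]; field_simp
    rw [← hlamg]; linarith [h5]
  have hB : (g - t) * lam' g = (-lam' g) * u := by ring
  have hAmem : b - lam t ∈ Icc (c₀ * u) (Cb * u) := by
    rw [hA]
    exact ⟨mul_le_mul_of_nonneg_right hξlow hu.le,
      mul_le_mul_of_nonneg_right hξhi hu.le⟩
  have hBmem : (g - t) * lam' g ∈ Icc (c₀ * u) (Cb * u) := by
    rw [hB]
    exact ⟨mul_le_mul_of_nonneg_right hglow hu.le,
      mul_le_mul_of_nonneg_right hghi hu.le⟩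
  -- Hölder bound on the difference
  have hdiff : |(b - lam t) - (g - t) * lam' g| ≤ C' * u ^ (1 + s) := by
    have h1 : (b - lam t) - (g - t) * lam' g = (lam' g - lam' ξ) * u := by
      rw [hA, hB]; ring
    rw [h1, abs_mul, abs_of_pos hu]
    have h2 : |lam' g - lam' ξ| ≤ C' * |g - ξ| ^ s :=
      hHolder g hgmem ξ hξmem
    have h3 : |g - ξ| ≤ u := by
      rw [abs_sub_comm, abs_of_pos (by linarith [hξ.1] : (0:ℝ) < ξ - g)]
      linarith [hξ.2]
    have h4 : |g - ξ| ^ s ≤ u ^ s :=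
      Real.rpow_le_rpow (abs_nonneg _) h3 hs0.le
    calc |lam' g - lam' ξ| * u ≤ (C' * u ^ s) * u := by
          apply mul_le_mul_of_nonneg_right _ hu.le
          exact h2.trans (mul_le_mul_of_nonneg_left h4 hC'.le)
      _ = C' * u ^ (1 + s) := by
          rw [Real.rpow_add hu, Real.rpow_one]; ring
  -- main estimate
  rcases eq_or_lt_of_le hp with rfl | hp1
  · simp only [sub_self, Real.rpow_zero, sub_self, abs_zero]
    positivity
  · have hq : 0 < p - 1 := by linarith
    have hkey := rpow_diff_le (p - 1) (c₀ * u) (Cb * u) (b - lam t)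
      ((g - t) * lam' g) hq (by positivity) hAmem hBmem
    have hmax : max ((c₀ * u) ^ (p - 1 - 1)) ((Cb * u) ^ (p - 1 - 1))
        = D * u ^ (p - 2) := by
      have hCb : 0 < Cb := hc₀.trans_le (hglow.trans hghi)
      rw [Real.mul_rpow hc₀.le hu.le, Real.mul_rpow hCb.le hu.le]
      rw [hD, max_mul_of_nonneg _ _ (Real.rpow_pos_of_pos hu _).le,
        show p - 1 - 1 = p - 2 by ring]
    rw [hmax] at hkey
    calc |(b - lam t) ^ (p - 1) - ((g - t) * lam' g) ^ (p - 1)|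
        ≤ (p - 1) * (D * u ^ (p - 2)) * |(b - lam t) - (g - t) * lam' g| := hkey
      _ ≤ (p - 1) * (D * u ^ (p - 2)) * (C' * u ^ (1 + s)) := by
          apply mul_le_mul_of_nonneg_left hdiff
          have : (0:ℝ) < D := lt_max_of_lt_left (Real.rpow_pos_of_pos hc₀ _)
          positivity
      _ = ((p - 1) * D * C') * (u ^ (p - 2) * u ^ (1 + s)) := by ring
      _ = ((p - 1) * D * C') * u ^ (p - 1 + s) := by
          rw [← Real.rpow_add hu]; ring_nf
      _ ≤ max ((p - 1) * D * C') 1 * u ^ (p - 1 + s) := by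
          apply mul_le_mul_of_nonneg_right (le_max_left _ _)
          exact (Real.rpow_pos_of_pos hu _).le
end
end
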